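/- Let (𝕃(V),∂) with V = V₀ ⊕ V₁, ∂(V₀) = 0, ∂(V₁) ⊆ 𝕃(V₀), be the minimal Quillen model of a 2-cone X, let V' be a copy of V, and let (L,D) be the model of X × X with L = 𝕃(V ⊕ V' ⊕ s(V⊗V')). Let Δ : 𝕃(V₀) → L be the Lie morphism Δ(v) = v + v' and Γ : 𝕄(V₀) → L the map defined by Γ(v) = 0 and Γ(AB) = σ_Ā(B̄') − (−1)^{|A||B|} σ_B̄(Ā') + (1/2)(−1)^{|A|}[ΔĀ + Ā + Ā', ΓB] + (1/2)[ΓA, ΔB̄ + B̄ + B̄']. Then for every A ∈ 𝕄(V₀): D(Γ(A)) = Δ(Ā) − Ā − Ā'. -/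

import Mathlib

universe u

/-- A graded Lie algebra over `ℚ`: a `ℤ`-graded vector space with a bilinear bracket
satisfying graded antisymmetry and the graded Jacobi identity on homogeneous elements. -/
structure GLA (Lc : Type u) [AddCommGroup Lc] [Module ℚ Lc] where
  grade : ℤ → Submodule ℚ Lc
  internal : DirectSum.IsInternal grade
  br : Lc →ₗ[ℚ] Lc →ₗ[ℚ] Lc
  br_mem : ∀ {i j : ℤ} {x y : Lc}, x ∈ grade i → y ∈ grade j → br x y ∈ grade (i + j)
  antisymm : ∀ {i j : ℤ} {x y : Lc}, x ∈ grade i → y ∈ grade j →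
      br x y = -((-1 : ℚ) ^ (i * j) • br y x)
  jacobi : ∀ {i j : ℤ} {x y : Lc} (z : Lc), x ∈ grade i → y ∈ grade j →
      br x (br y z) = br (br x y) z + (-1 : ℚ) ^ (i * j) • br y (br x z)

namespace GLA

variable {Lc : Type u} [AddCommGroup Lc] [Module ℚ Lc]

/-- The Lie subalgebra (as a submodule closed under the bracket) generated by
a graded family of subspaces. -/
def lieSub (G : GLA Lc) (p : ℤ → Submodule ℚ Lc) : Submodule ℚ Lc :=
  sInf {q | (∀ i, p i ≤ q) ∧ ∀ x ∈ q, ∀ y ∈ q, G.br x y ∈ q}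

/-- The submodule of decomposable elements of `L`: the span of all brackets. -/
def dec (G : GLA Lc) : Submodule ℚ Lc :=
  Submodule.span ℚ {x : Lc | ∃ a b : Lc, x = G.br a b}

/-- A graded Lie algebra is reduced if it vanishes in degrees `≤ 0`. -/
def Reduced (G : GLA Lc) : Prop := ∀ i : ℤ, i ≤ 0 → G.grade i = ⊥

end GLA


/-- Trees of the free graded linear magma on the graded subspace family `P`
(homogeneous generators and formal binary products). -/
inductive Mag {Lc : Type u} [AddCommGroup Lc] [Module ℚ Lc]
    (P : ℤ → Submodule ℚ Lc) : Type u
  | of (i : ℤ) (v : Lc) (hv : v ∈ P i) : Mag P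
  | mul : Mag P → Mag P → Mag P

namespace Mag

variable {Lc : Type u} [AddCommGroup Lc] [Module ℚ Lc] {P : ℤ → Submodule ℚ Lc}

/-- Degree of a magma element. -/
def deg : Mag P → ℤ
  | of i _ _ => i
  | mul A B => deg A + deg B

/-- The class of a magma element in the (free) graded Lie algebra. -/
def real (G : GLA Lc) : Mag P → Lc
  | of _ v _ => v
  | mul A B => G.br (real G A) (real G B)

/-- The star operator `⋆ : 𝕄(V) ⊗ 𝕃(W) → L`, applied to a homogeneous element `T`
of degree `t`, defined recursively by `a ⋆ T = 0` for a generator `a` and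
`AB ⋆ T = (-1)^{|A|} σ_Ā σ_B̄ (T) + (-1)^{|B||T|} [A ⋆ T, B̄] + [Ā, B ⋆ T]`. -/
def star (G : GLA Lc) (sg : ℤ → Lc → (Lc →ₗ[ℚ] Lc)) (t : ℤ) : Mag P → Lc → Lc
  | of _ _ _, _ => 0
  | mul A B, T =>
      (-1 : ℚ) ^ deg A • sg (deg A) (real G A) (sg (deg B) (real G B) T)
        + (-1 : ℚ) ^ (deg B * t) • G.br (star G sg t A T) (real G B)
        + G.br (real G A) (star G sg t B T)

end Mag

namespace Mag

/-- The map `Γ : 𝕄(V₀) → L` defined by `Γ(v) = 0` and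
`Γ(AB) = σ_Ā(B̄') - (-1)^{|A||B|} σ_B̄(Ā')
  + ½(-1)^{|A|}[ΔĀ + Ā + Ā', ΓB] + ½[ΓA, ΔB̄ + B̄ + B̄']`,
where `pr` is the "prime" (copy) map and `Dl` models the diagonal `Δ` on `𝕃(V₀)`. -/
def gam {Lc : Type u} [AddCommGroup Lc] [Module ℚ Lc] {P : ℤ → Submodule ℚ Lc}
    (G : GLA Lc) (sg : ℤ → Lc → (Lc →ₗ[ℚ] Lc)) (pr Dl : Lc →ₗ[ℚ] Lc) : Mag P → Lc
  | of _ _ _ => 0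
  | mul A B =>
      sg (deg A) (real G A) (pr (real G B))
        - (-1 : ℚ) ^ (deg A * deg B) • sg (deg B) (real G B) (pr (real G A))
        + ((2 : ℚ)⁻¹ * (-1 : ℚ) ^ deg A) •
            G.br (Dl (real G A) + real G A + pr (real G A)) (gam G sg pr Dl B)
        + (2 : ℚ)⁻¹ • G.br (gam G sg pr Dl A) (Dl (real G B) + real G B + pr (real G B))

end Mag

/-!
The key identity is `D(σ_Ā(B̄')) = [Ā, B̄']` for `A, B ∈ 𝕄(V₀)`. On generators it is
`D(s(v ⊗ w)) = [v, w]`; it passes to brackets because `D` and `σ_Ā` are derivations and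
`σ_Ā(w) = ±σ_w(Ā)`, the Jacobi identity reassembling the terms. Since `Ā`, `Ā'` and `ΔĀ` are
cycles, applying `D` to the recursive formula for `Γ(AB)` gives, by induction,
`[Ā, B̄'] + [Ā', B̄] + ½[ΔĀ + Ā + Ā', ΔB̄ - B̄ - B̄'] + ½[ΔĀ - Ā - Ā', ΔB̄ + B̄ + B̄']`,
which expands to `[ΔĀ, ΔB̄] - [Ā, B̄] - [Ā', B̄'] = Δ(ĀB̄) - ĀB̄ - (ĀB̄)'`.
-/

theorem neg_one_zpow_eq_of_even_sub {K : Type*} [DivisionRing K] {m n : ℤ} (h : Even (m - n)) :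
    (-1 : K) ^ m = (-1) ^ n := by
  rw [← sub_add_cancel m n, zpow_add₀ (neg_ne_zero.2 one_ne_zero), h.neg_one_zpow, one_mul]

theorem neg_one_zpow_mul_eq {K : Type*} [DivisionRing K] {m n k : ℤ} (h : Even (m + n - k)) :
    (-1 : K) ^ m * (-1) ^ n = (-1) ^ k := by
  rw [← zpow_add₀ (neg_ne_zero.2 one_ne_zero), neg_one_zpow_eq_of_even_sub h]

namespace GLA

variable {Lc : Type u} [AddCommGroup Lc] [Module ℚ Lc] (G : GLA Lc)

theorem mem_lieSub_of_mem {p : ℤ → Submodule ℚ Lc} {i : ℤ} {v : Lc} (hv : v ∈ p i) :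
    v ∈ G.lieSub p :=
  Submodule.mem_sInf.2 fun _ hq => hq.1 i hv

theorem br_mem_lieSub {p : ℤ → Submodule ℚ Lc} {x y : Lc} (hx : x ∈ G.lieSub p)
    (hy : y ∈ G.lieSub p) : G.br x y ∈ G.lieSub p :=
  Submodule.mem_sInf.2 fun q hq =>
    hq.2 x (Submodule.mem_sInf.1 hx q hq) y (Submodule.mem_sInf.1 hy q hq)

theorem lieSub_mono {p p' : ℤ → Submodule ℚ Lc} (h : ∀ i, p i ≤ p' i) :
    G.lieSub p ≤ G.lieSub p' :=
  sInf_le_sInf fun _ ⟨hp', hbr⟩ => ⟨fun i => (h i).trans (hp' i), hbr⟩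

theorem jacobi_right {a b j : ℤ} {x y w : Lc} (hx : x ∈ G.grade a) (hy : y ∈ G.grade b)
    (hw : w ∈ G.grade j) :
    G.br (G.br x y) w = G.br x (G.br y w) + (-1 : ℚ) ^ (j * b) • G.br (G.br x w) y := by
  have hsign : (-1 : ℚ) ^ (j * b) * (-1) ^ ((a + j) * b) = (-1) ^ (a * b) :=
    neg_one_zpow_mul_eq ⟨j * b, by ring⟩
  rw [G.jacobi w hx hy, G.antisymm (G.br_mem hx hw) hy, smul_neg, smul_smul, hsign]
  abel

end GLA

namespace Mag

variable {Lc : Type u} [AddCommGroup Lc] [Module ℚ Lc] {P : ℤ → Submodule ℚ Lc} (G : GLA Lc)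

theorem real_mem_lieSub (A : Mag P) : real G A ∈ G.lieSub P := by
  induction A with
  | of i v hv => exact G.mem_lieSub_of_mem hv
  | mul A B ihA ihB => exact G.br_mem_lieSub ihA ihB

theorem map_real_mem_grade {f : Lc →ₗ[ℚ] Lc}
    (hf_br : ∀ {x y : Lc}, x ∈ G.lieSub P → y ∈ G.lieSub P → f (G.br x y) = G.br (f x) (f y))
    (hf : ∀ {i : ℤ} {v : Lc}, v ∈ P i → f v ∈ G.grade i) (A : Mag P) :
    f (real G A) ∈ G.grade (deg A) := by
  induction A with
  | of i v hv => exact hf hv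
  | mul A B ihA ihB =>
    rw [real, hf_br (real_mem_lieSub G A) (real_mem_lieSub G B)]
    exact G.br_mem ihA ihB

theorem real_mem_grade (hP : ∀ i, P i ≤ G.grade i) (A : Mag P) : real G A ∈ G.grade (deg A) :=
  map_real_mem_grade G (f := LinearMap.id) (fun _ _ => rfl) (fun hv => hP _ hv) A

theorem derivation_map_real_eq_zero {D f : Lc →ₗ[ℚ] Lc}
    (hD : ∀ {i : ℤ} (x y : Lc), x ∈ G.grade i →
      D (G.br x y) = G.br (D x) y + (-1 : ℚ) ^ ((-1 : ℤ) * i) • G.br x (D y))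
    (hf_br : ∀ {x y : Lc}, x ∈ G.lieSub P → y ∈ G.lieSub P → f (G.br x y) = G.br (f x) (f y))
    (hf : ∀ {i : ℤ} {v : Lc}, v ∈ P i → f v ∈ G.grade i)
    (hDf : ∀ {i : ℤ} {v : Lc}, v ∈ P i → D (f v) = 0) (A : Mag P) :
    D (f (real G A)) = 0 := by
  induction A with
  | of i v hv => exact hDf hv
  | mul A B ihA ihB =>
    rw [real, hf_br (real_mem_lieSub G A) (real_mem_lieSub G B),
      hD _ _ (map_real_mem_grade G hf_br hf A), ihA, ihB]
    simp

end Mag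

/-- The part of the model `(L, D)` of `X × X` seen by `𝕃(V₀)`: `U` generates `𝕃(V ⊕ V')`, on
which the derivations `σ_A` are defined, `pr` is `v ↦ v'` and `Dl` is the diagonal `Δ`. -/
structure IsProductModel {Lc : Type u} [AddCommGroup Lc] [Module ℚ Lc] (G : GLA Lc)
    (V0 W0 U : ℤ → Submodule ℚ Lc) (sg : ℤ → Lc → (Lc →ₗ[ℚ] Lc)) (D pr Dl : Lc →ₗ[ℚ] Lc) :
    Prop where
  V0_le_grade : ∀ i, V0 i ≤ G.grade i
  W0_le_grade : ∀ i, W0 i ≤ G.grade i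
  V0_le_U : ∀ i, V0 i ≤ U i
  W0_le_U : ∀ i, W0 i ≤ U i
  sg_grade : ∀ {a : ℤ} {A : Lc}, A ∈ G.lieSub U → A ∈ G.grade a →
    ∀ {n : ℤ} {x : Lc}, x ∈ G.grade n → sg a A x ∈ G.grade (n + a + 1)
  sg_der : ∀ {a : ℤ} {A : Lc}, A ∈ G.lieSub U → A ∈ G.grade a → ∀ {n : ℤ} (x y : Lc),
    x ∈ G.grade n →
    sg a A (G.br x y) = G.br (sg a A x) y + (-1 : ℚ) ^ ((a + 1) * n) • G.br x (sg a A y)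
  sg_apply_W0 : ∀ {a : ℤ} {A : Lc}, A ∈ G.lieSub U → A ∈ G.grade a →
    ∀ {j : ℤ} {w : Lc}, w ∈ W0 j → sg a A w = (-1 : ℚ) ^ (j * a) • sg j w A
  D_sg_V0_W0 : ∀ {i j : ℤ} {v w : Lc}, v ∈ V0 i → w ∈ W0 j → D (sg i v w) = G.br v w
  D_der : ∀ {i : ℤ} (x y : Lc), x ∈ G.grade i →
    D (G.br x y) = G.br (D x) y + (-1 : ℚ) ^ ((-1 : ℤ) * i) • G.br x (D y)
  D_V0 : ∀ {i : ℤ} {v : Lc}, v ∈ V0 i → D v = 0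
  D_W0 : ∀ {j : ℤ} {w : Lc}, w ∈ W0 j → D w = 0
  pr_V0 : ∀ {i : ℤ} {v : Lc}, v ∈ V0 i → pr v ∈ W0 i
  pr_br : ∀ {x y : Lc}, x ∈ G.lieSub V0 → y ∈ G.lieSub V0 → pr (G.br x y) = G.br (pr x) (pr y)
  Dl_V0 : ∀ {i : ℤ} {v : Lc}, v ∈ V0 i → Dl v = v + pr v
  Dl_br : ∀ {x y : Lc}, x ∈ G.lieSub V0 → y ∈ G.lieSub V0 → Dl (G.br x y) = G.br (Dl x) (Dl y)

namespace IsProductModel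

open Mag

variable {Lc : Type u} [AddCommGroup Lc] [Module ℚ Lc] {G : GLA Lc}
  {V0 W0 U : ℤ → Submodule ℚ Lc} {sg : ℤ → Lc → (Lc →ₗ[ℚ] Lc)} {D pr Dl : Lc →ₗ[ℚ] Lc}

theorem real_mem_lieSub_U (h : IsProductModel G V0 W0 U sg D pr Dl)
    (A : Mag V0) : real G A ∈ G.lieSub U :=
  G.lieSub_mono h.V0_le_U (real_mem_lieSub G A)

theorem real_mem_grade (h : IsProductModel G V0 W0 U sg D pr Dl)
    (A : Mag V0) : real G A ∈ G.grade (deg A) :=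
  Mag.real_mem_grade G h.V0_le_grade A

theorem pr_mem_grade (h : IsProductModel G V0 W0 U sg D pr Dl)
    {i : ℤ} {v : Lc} (hv : v ∈ V0 i) : pr v ∈ G.grade i :=
  h.W0_le_grade i (h.pr_V0 hv)

theorem Dl_mem_grade (h : IsProductModel G V0 W0 U sg D pr Dl)
    {i : ℤ} {v : Lc} (hv : v ∈ V0 i) : Dl v ∈ G.grade i := by
  rw [h.Dl_V0 hv]
  exact add_mem (h.V0_le_grade i hv) (h.pr_mem_grade hv)

theorem pr_real_mem_grade (h : IsProductModel G V0 W0 U sg D pr Dl)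
    (A : Mag V0) : pr (real G A) ∈ G.grade (deg A) :=
  map_real_mem_grade G h.pr_br h.pr_mem_grade A

theorem Dl_real_mem_grade (h : IsProductModel G V0 W0 U sg D pr Dl)
    (A : Mag V0) : Dl (real G A) ∈ G.grade (deg A) :=
  map_real_mem_grade G h.Dl_br h.Dl_mem_grade A

theorem D_real (h : IsProductModel G V0 W0 U sg D pr Dl)
    (A : Mag V0) : D (real G A) = 0 :=
  derivation_map_real_eq_zero G (f := LinearMap.id) h.D_der (fun _ _ => rfl)
    (fun hv => h.V0_le_grade _ hv) h.D_V0 A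

theorem D_pr_real (h : IsProductModel G V0 W0 U sg D pr Dl)
    (A : Mag V0) : D (pr (real G A)) = 0 :=
  derivation_map_real_eq_zero G h.D_der h.pr_br h.pr_mem_grade
    (fun hv => h.D_W0 (h.pr_V0 hv)) A

theorem D_Dl_real (h : IsProductModel G V0 W0 U sg D pr Dl)
    (A : Mag V0) : D (Dl (real G A)) = 0 :=
  derivation_map_real_eq_zero G h.D_der h.Dl_br h.Dl_mem_grade
    (fun hv => by rw [h.Dl_V0 hv, map_add, h.D_V0 hv, h.D_W0 (h.pr_V0 hv), add_zero]) A

theorem sg_br_W0 (h : IsProductModel G V0 W0 U sg D pr Dl) {a b j : ℤ} {x y w : Lc}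
    (hxU : x ∈ G.lieSub U) (hyU : y ∈ G.lieSub U) (hx : x ∈ G.grade a) (hy : y ∈ G.grade b)
    (hw : w ∈ W0 j) :
    sg (a + b) (G.br x y) w
      = (-1 : ℚ) ^ (j * b) • G.br (sg a x w) y + (-1 : ℚ) ^ a • G.br x (sg b y w) := by
  have hwU : w ∈ G.lieSub U := G.mem_lieSub_of_mem (h.W0_le_U j hw)
  have sg_w : ∀ {c : ℤ} {z : Lc}, z ∈ G.lieSub U → z ∈ G.grade c →
      sg j w z = (-1 : ℚ) ^ (j * c) • sg c z w := by
    intro c z hzU hz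
    have hsign : (-1 : ℚ) ^ (j * c) * (-1) ^ (j * c) = 1 :=
      neg_one_zpow_mul_eq (k := 0) ⟨j * c, by ring⟩
    rw [h.sg_apply_W0 hzU hz hw, smul_smul, hsign, one_smul]
  rw [h.sg_apply_W0 (G.br_mem_lieSub hxU hyU) (G.br_mem hx hy) hw,
    h.sg_der hwU (h.W0_le_grade j hw) x y hx, sg_w hxU hx, sg_w hyU hy]
  have hsign₁ : (-1 : ℚ) ^ (j * (a + b)) * (-1) ^ (j * a) = (-1) ^ (j * b) :=
    neg_one_zpow_mul_eq ⟨j * a, by ring⟩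
  have hsign₂ :
      (-1 : ℚ) ^ (j * (a + b)) * ((-1) ^ ((j + 1) * a) * (-1) ^ (j * b)) = (-1) ^ a := by
    simp only [← zpow_add₀ (neg_ne_zero.2 (one_ne_zero (α := ℚ)))]
    exact neg_one_zpow_eq_of_even_sub ⟨j * a + j * b, by ring⟩
  simp only [map_smul, LinearMap.smul_apply, smul_add, smul_smul, hsign₁, hsign₂]

theorem D_sg_real_of_W0 (h : IsProductModel G V0 W0 U sg D pr Dl) {j : ℤ} {w : Lc}
    (hw : w ∈ W0 j) (A : Mag V0) : D (sg (deg A) (real G A) w) = G.br (real G A) w := by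
  induction A with
  | of i v hv => exact h.D_sg_V0_W0 hv hw
  | mul A B ihA ihB =>
    have hA := h.real_mem_grade A
    have hB := h.real_mem_grade B
    have hAU := h.real_mem_lieSub_U A
    have hwG := h.W0_le_grade j hw
    have hDleft : D (G.br (sg (deg A) (real G A) w) (real G B))
        = G.br (G.br (real G A) w) (real G B) := by
      rw [h.D_der _ _ (h.sg_grade hAU hA hwG), ihA, h.D_real B, map_zero, smul_zero, add_zero]
    have hDright : D (G.br (real G A) (sg (deg B) (real G B) w))
        = (-1 : ℚ) ^ ((-1 : ℤ) * deg A) • G.br (real G A) (G.br (real G B) w) := by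
      rw [h.D_der _ _ hA, ihB, h.D_real A, LinearMap.map_zero₂, zero_add]
    have hsign : (-1 : ℚ) ^ deg A * (-1) ^ ((-1 : ℤ) * deg A) = 1 :=
      neg_one_zpow_mul_eq (k := 0) ⟨0, by ring⟩
    rw [deg, real, h.sg_br_W0 hAU (h.real_mem_lieSub_U B) hA hB hw, map_add, map_smul, map_smul,
      hDleft, hDright, smul_smul, hsign, one_smul,
      G.jacobi_right hA hB hwG, add_comm]

theorem D_sg_real_pr_real (h : IsProductModel G V0 W0 U sg D pr Dl) (A B : Mag V0) :
    D (sg (deg A) (real G A) (pr (real G B))) = G.br (real G A) (pr (real G B)) := by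
  induction B with
  | of j w hw => exact h.D_sg_real_of_W0 (h.pr_V0 hw) A
  | mul B C ihB ihC =>
    have hA := h.real_mem_grade A
    have hAU := h.real_mem_lieSub_U A
    have hB := h.pr_real_mem_grade B
    have hsign : (-1 : ℚ) ^ ((deg A + 1) * deg B) * (-1) ^ ((-1 : ℤ) * deg B)
        = (-1) ^ (deg A * deg B) :=
      neg_one_zpow_mul_eq ⟨0, by ring⟩
    rw [real, h.pr_br (real_mem_lieSub G B) (real_mem_lieSub G C), h.sg_der hAU hA _ _ hB,
      map_add, map_smul, h.D_der _ _ (h.sg_grade hAU hA hB), h.D_der _ _ hB, ihB, ihC,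
      h.D_pr_real B, h.D_pr_real C, map_zero, smul_zero, add_zero, LinearMap.map_zero₂,
      zero_add, smul_smul, hsign, G.jacobi _ hA hB]

theorem gam_mem_grade (h : IsProductModel G V0 W0 U sg D pr Dl) (M : Mag V0) :
    gam G sg pr Dl M ∈ G.grade (deg M + 1) := by
  induction M with
  | of i v hv => exact Submodule.zero_mem _
  | mul A B ihA ihB =>
    have hA := h.real_mem_grade A
    have hB := h.real_mem_grade B
    have hsumA : Dl (real G A) + real G A + pr (real G A) ∈ G.grade (deg A) :=
      add_mem (add_mem (h.Dl_real_mem_grade A) hA) (h.pr_real_mem_grade A)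
    have hsumB : Dl (real G B) + real G B + pr (real G B) ∈ G.grade (deg B) :=
      add_mem (add_mem (h.Dl_real_mem_grade B) hB) (h.pr_real_mem_grade B)
    have hσAB := h.sg_grade (h.real_mem_lieSub_U A) hA (h.pr_real_mem_grade B)
    have hσBA := h.sg_grade (h.real_mem_lieSub_U B) hB (h.pr_real_mem_grade A)
    rw [deg, gam]
    refine add_mem (add_mem (sub_mem ?_ (Submodule.smul_mem _ _ hσBA))
      (Submodule.smul_mem _ _ ?_)) (Submodule.smul_mem _ _ ?_)
    · convert hσAB using 2; ring
    · convert G.br_mem hsumA ihB using 2; ring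
    · convert G.br_mem ihA hsumB using 2; ring

theorem D_gam (h : IsProductModel G V0 W0 U sg D pr Dl) (M : Mag V0) :
    D (gam G sg pr Dl M) = Dl (real G M) - real G M - pr (real G M) := by
  induction M with
  | of i v hv =>
    rw [gam, real, map_zero, h.Dl_V0 hv]
    abel
  | mul A B ihA ihB =>
    have hA := h.real_mem_grade A
    have hB := h.real_mem_grade B
    have hDK : ∀ C : Mag V0, D (Dl (real G C) + real G C + pr (real G C)) = 0 := fun C => by
      rw [map_add, map_add, h.D_Dl_real, h.D_real, h.D_pr_real, add_zero, add_zero]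
    have hBA : (-1 : ℚ) ^ (deg A * deg B) • D (sg (deg B) (real G B) (pr (real G A)))
        = -G.br (pr (real G A)) (real G B) := by
      have hsign : (-1 : ℚ) ^ (deg A * deg B) * (-1) ^ (deg B * deg A) = 1 :=
        neg_one_zpow_mul_eq (k := 0) ⟨deg A * deg B, by ring⟩
      rw [h.D_sg_real_pr_real, G.antisymm hB (h.pr_real_mem_grade A), smul_neg, smul_smul,
        hsign, one_smul]
    have hKΓ :
        (-1 : ℚ) ^ deg A • D (G.br (Dl (real G A) + real G A + pr (real G A)) (gam G sg pr Dl B))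
          = G.br (Dl (real G A) + real G A + pr (real G A))
              (Dl (real G B) - real G B - pr (real G B)) := by
      have hsign : (-1 : ℚ) ^ deg A * (-1) ^ ((-1 : ℤ) * deg A) = 1 :=
        neg_one_zpow_mul_eq (k := 0) ⟨0, by ring⟩
      have hK := add_mem (add_mem (h.Dl_real_mem_grade A) hA) (h.pr_real_mem_grade A)
      rw [h.D_der _ _ hK, hDK, ihB, LinearMap.map_zero₂, zero_add, smul_smul, hsign, one_smul]
    have hΓK : D (G.br (gam G sg pr Dl A) (Dl (real G B) + real G B + pr (real G B)))
        = G.br (Dl (real G A) - real G A - pr (real G A))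
            (Dl (real G B) + real G B + pr (real G B)) := by
      rw [h.D_der _ _ (h.gam_mem_grade A), hDK, ihA, map_zero, smul_zero, add_zero]
    rw [gam, map_add, map_add, map_sub, map_smul, map_smul, map_smul, mul_smul,
      h.D_sg_real_pr_real, hBA, hKΓ, hΓK, real, h.Dl_br (real_mem_lieSub G A) (real_mem_lieSub G B),
      h.pr_br (real_mem_lieSub G A) (real_mem_lieSub G B)]
    simp only [map_add, map_sub, LinearMap.add_apply, LinearMap.sub_apply]
    module

end IsProductModel

theorem statement16_general
    {Lc : Type u} [AddCommGroup Lc] [Module ℚ Lc] (G : GLA Lc)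
    (V0 V1 W0 W1 : ℤ → Submodule ℚ Lc)
    (hV0 : ∀ i, V0 i ≤ G.grade i)
    (hW0 : ∀ i, W0 i ≤ G.grade i)
    -- the suspension `s(v ⊗ w)`, bilinear, of degree `|v|+|w|+1`
    (sus : Lc →ₗ[ℚ] Lc →ₗ[ℚ] Lc)
    -- the derivations `σ_A` for homogeneous `A ∈ 𝕃(V ⊕ W)`
    (sg : ℤ → Lc → (Lc →ₗ[ℚ] Lc))
    (hsg_grade : ∀ {a : ℤ} {A : Lc}, A ∈ G.lieSub (fun i => V0 i ⊔ V1 i ⊔ W0 i ⊔ W1 i) →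
      A ∈ G.grade a → ∀ {n : ℤ} {x : Lc}, x ∈ G.grade n → sg a A x ∈ G.grade (n + a + 1))
    (hsg_der : ∀ {a : ℤ} {A : Lc}, A ∈ G.lieSub (fun i => V0 i ⊔ V1 i ⊔ W0 i ⊔ W1 i) →
      A ∈ G.grade a → ∀ {n : ℤ} (x y : Lc), x ∈ G.grade n →
      sg a A (G.br x y) = G.br (sg a A x) y + (-1 : ℚ) ^ ((a + 1) * n) • G.br x (sg a A y))
    (hsg_vw : ∀ {i j : ℤ} {v w : Lc}, v ∈ V0 i ⊔ V1 i → w ∈ W0 j ⊔ W1 j →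
      sg i v w = sus v w)
    (hsg_Aw : ∀ {a : ℤ} {A : Lc}, A ∈ G.lieSub (fun i => V0 i ⊔ V1 i ⊔ W0 i ⊔ W1 i) →
      A ∈ G.grade a → ∀ {j : ℤ} {w : Lc}, w ∈ W0 j ⊔ W1 j →
      sg a A w = (-1 : ℚ) ^ (j * a) • sg j w A)
    -- the degree `-1` derivation `D` of `L`
    (D : Lc →ₗ[ℚ] Lc)
    (hD_der : ∀ {i : ℤ} (x y : Lc), x ∈ G.grade i →
      D (G.br x y) = G.br (D x) y + (-1 : ℚ) ^ ((-1 : ℤ) * i) • G.br x (D y))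
    -- `D = ∂_V` on `V`, `D = ∂_W` on `W`: two-stage (2-cone) minimal models
    (hD_V0 : ∀ {i : ℤ} {v : Lc}, v ∈ V0 i → D v = 0)
    (hD_W0 : ∀ {j : ℤ} {w : Lc}, w ∈ W0 j → D w = 0)
    -- the value of `D` on the suspension generators, formula (7) of the paper
    (hD_sus00 : ∀ {i j : ℤ} {v w : Lc}, v ∈ V0 i → w ∈ W0 j → D (sus v w) = G.br v w)
    -- `W = V'` is a copy of `V`: the "prime" map, a dgl isomorphism onto the copy
    (pr : Lc →ₗ[ℚ] Lc)
    (hpr_V0 : ∀ {i : ℤ} {v : Lc}, v ∈ V0 i → pr v ∈ W0 i)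
    (hpr_br : ∀ {x y : Lc}, x ∈ G.lieSub (fun i => V0 i ⊔ V1 i) →
      y ∈ G.lieSub (fun i => V0 i ⊔ V1 i) → pr (G.br x y) = G.br (pr x) (pr y))
    -- the Lie morphism `Δ : 𝕃(V₀) → L`, `Δ(v) = v + v'`, modelling the diagonal on `𝕃(V₀)`
    (Dl : Lc →ₗ[ℚ] Lc)
    (hDl_v : ∀ {i : ℤ} {v : Lc}, v ∈ V0 i → Dl v = v + pr v)
    (hDl_br : ∀ {x y : Lc}, x ∈ G.lieSub V0 → y ∈ G.lieSub V0 →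
      Dl (G.br x y) = G.br (Dl x) (Dl y))
 :
    ∀ M : Mag V0,
      D (Mag.gam G sg pr Dl M)
        = Dl (Mag.real G M) - Mag.real G M - pr (Mag.real G M) := by
  have hV0V1 : G.lieSub V0 ≤ G.lieSub (fun i => V0 i ⊔ V1 i) :=
    G.lieSub_mono fun _ => le_sup_left
  have model : IsProductModel G V0 W0 (fun i => V0 i ⊔ V1 i ⊔ W0 i ⊔ W1 i) sg D pr Dl :=
    { V0_le_grade := hV0
      W0_le_grade := hW0
      V0_le_U := fun _ => le_sup_left.trans (le_sup_left.trans le_sup_left)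
      W0_le_U := fun _ => le_sup_right.trans le_sup_left
      sg_grade := hsg_grade
      sg_der := hsg_der
      sg_apply_W0 := fun hA ha _ _ hw => hsg_Aw hA ha (Submodule.mem_sup_left hw)
      D_sg_V0_W0 := fun hv hw => by
        rw [hsg_vw (Submodule.mem_sup_left hv) (Submodule.mem_sup_left hw)]
        exact hD_sus00 hv hw
      D_der := hD_der
      D_V0 := hD_V0
      D_W0 := hD_W0
      pr_V0 := hpr_V0
      pr_br := fun hx hy => hpr_br (hV0V1 hx) (hV0V1 hy)
      Dl_V0 := hDl_v
      Dl_br := hDl_br }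
  exact model.D_gam

/-- Lemma 4.2.  For the model `(L, D)` of `X × X` of a 2-cone `X`, the
map `Γ : 𝕄(V₀) → L` defined by `Γ(v) = 0` and
`Γ(AB) = σ_Ā(B̄') - (-1)^{|A||B|} σ_B̄(Ā') + ½(-1)^{|A|}[ΔĀ + Ā + Ā', ΓB]
        + ½[ΓA, ΔB̄ + B̄ + B̄']`
satisfies `D(Γ(A)) = Δ(Ā) - Ā - Ā'` for every `A ∈ 𝕄(V₀)`. -/
theorem statement16
    {Lc : Type u} [AddCommGroup Lc] [Module ℚ Lc] (G : GLA Lc)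
    (V0 V1 W0 W1 Sp : ℤ → Submodule ℚ Lc)
    -- the ambient free Lie algebra is reduced
    (hred : G.Reduced)
    (hV0 : ∀ i, V0 i ≤ G.grade i) (hV1 : ∀ i, V1 i ≤ G.grade i)
    (hW0 : ∀ i, W0 i ≤ G.grade i) (hW1 : ∀ i, W1 i ≤ G.grade i)
    (hSp : ∀ i, Sp i ≤ G.grade i)
    -- the suspension `s(v ⊗ w)`, bilinear, of degree `|v|+|w|+1`
    (sus : Lc →ₗ[ℚ] Lc →ₗ[ℚ] Lc)
    (hsus : ∀ {i j : ℤ} {v w : Lc}, v ∈ V0 i ⊔ V1 i → w ∈ W0 j ⊔ W1 j →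
      sus v w ∈ Sp (i + j + 1))
    -- `L` is generated by `V ⊕ W ⊕ s(V ⊗ W)`
    (hgen : G.lieSub (fun i => V0 i ⊔ V1 i ⊔ W0 i ⊔ W1 i ⊔ Sp i) = ⊤)
    -- the derivations `σ_A` for homogeneous `A ∈ 𝕃(V ⊕ W)`
    (sg : ℤ → Lc → (Lc →ₗ[ℚ] Lc))
    (hsg_grade : ∀ {a : ℤ} {A : Lc}, A ∈ G.lieSub (fun i => V0 i ⊔ V1 i ⊔ W0 i ⊔ W1 i) →
      A ∈ G.grade a → ∀ {n : ℤ} {x : Lc}, x ∈ G.grade n → sg a A x ∈ G.grade (n + a + 1))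
    (hsg_der : ∀ {a : ℤ} {A : Lc}, A ∈ G.lieSub (fun i => V0 i ⊔ V1 i ⊔ W0 i ⊔ W1 i) →
      A ∈ G.grade a → ∀ {n : ℤ} (x y : Lc), x ∈ G.grade n →
      sg a A (G.br x y) = G.br (sg a A x) y + (-1 : ℚ) ^ ((a + 1) * n) • G.br x (sg a A y))
    (hsg_vw : ∀ {i j : ℤ} {v w : Lc}, v ∈ V0 i ⊔ V1 i → w ∈ W0 j ⊔ W1 j →
      sg i v w = sus v w)
    (hsg_wv : ∀ {i j : ℤ} {v w : Lc}, v ∈ V0 i ⊔ V1 i → w ∈ W0 j ⊔ W1 j →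
      sg j w v = (-1 : ℚ) ^ (i * j) • sus v w)
    (hsg_vv : ∀ {i i' : ℤ} {v v' : Lc}, v ∈ V0 i ⊔ V1 i → v' ∈ V0 i' ⊔ V1 i' →
      sg i v v' = 0)
    (hsg_ww : ∀ {j j' : ℤ} {w w' : Lc}, w ∈ W0 j ⊔ W1 j → w' ∈ W0 j' ⊔ W1 j' →
      sg j w w' = 0)
    (hsg_vS : ∀ {i k : ℤ} {v x : Lc}, v ∈ V0 i ⊔ V1 i → x ∈ Sp k → sg i v x = 0)
    (hsg_wS : ∀ {j k : ℤ} {w x : Lc}, w ∈ W0 j ⊔ W1 j → x ∈ Sp k → sg j w x = 0)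
    (hsg_Av : ∀ {a : ℤ} {A : Lc}, A ∈ G.lieSub (fun i => V0 i ⊔ V1 i ⊔ W0 i ⊔ W1 i) →
      A ∈ G.grade a → ∀ {i : ℤ} {v : Lc}, v ∈ V0 i ⊔ V1 i →
      sg a A v = (-1 : ℚ) ^ (i * a) • sg i v A)
    (hsg_Aw : ∀ {a : ℤ} {A : Lc}, A ∈ G.lieSub (fun i => V0 i ⊔ V1 i ⊔ W0 i ⊔ W1 i) →
      A ∈ G.grade a → ∀ {j : ℤ} {w : Lc}, w ∈ W0 j ⊔ W1 j →
      sg a A w = (-1 : ℚ) ^ (j * a) • sg j w A)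
    (hsg_AS : ∀ {a : ℤ} {A : Lc}, A ∈ G.lieSub (fun i => V0 i ⊔ V1 i ⊔ W0 i ⊔ W1 i) →
      A ∈ G.grade a → ∀ {k : ℤ} {x : Lc}, x ∈ Sp k → sg a A x = 0)
    -- the degree `-1` derivation `D` of `L`
    (D : Lc →ₗ[ℚ] Lc)
    (hD_grade : ∀ {i : ℤ} {x : Lc}, x ∈ G.grade i → D x ∈ G.grade (i - 1))
    (hD_der : ∀ {i : ℤ} (x y : Lc), x ∈ G.grade i →
      D (G.br x y) = G.br (D x) y + (-1 : ℚ) ^ ((-1 : ℤ) * i) • G.br x (D y))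
    -- `D = ∂_V` on `V`, `D = ∂_W` on `W`: two-stage (2-cone) minimal models
    (hD_V0 : ∀ {i : ℤ} {v : Lc}, v ∈ V0 i → D v = 0)
    (hD_W0 : ∀ {j : ℤ} {w : Lc}, w ∈ W0 j → D w = 0)
    (hD_V1 : ∀ {i : ℤ} {v : Lc}, v ∈ V1 i → D v ∈ G.lieSub V0)
    (hD_W1 : ∀ {j : ℤ} {w : Lc}, w ∈ W1 j → D w ∈ G.lieSub W0)
    (hD_V1dec : ∀ {i : ℤ} {v : Lc}, v ∈ V1 i → D v ∈ G.dec)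
    (hD_W1dec : ∀ {j : ℤ} {w : Lc}, w ∈ W1 j → D w ∈ G.dec)
    -- a chosen magma representative `(∂_V v)‾ ∈ 𝕄(V₀)` of `∂_V v` for `v ∈ V₁`
    (rep : ∀ (i : ℤ) (v : Lc), v ∈ V1 i → Mag V0)
    (hrep : ∀ (i : ℤ) (v : Lc) (h : v ∈ V1 i), Mag.real G (rep i v h) = D v)
    (hrepdeg : ∀ (i : ℤ) (v : Lc) (h : v ∈ V1 i), Mag.deg (rep i v h) = i - 1)
    -- the value of `D` on the suspension generators, formula (7) of the paper
    (hD_sus00 : ∀ {i j : ℤ} {v w : Lc}, v ∈ V0 i → w ∈ W0 j → D (sus v w) = G.br v w)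
    (hD_sus10 : ∀ {i j : ℤ} {v w : Lc}, v ∈ V1 i → w ∈ W0 j →
      D (sus v w) = G.br v w - (-1 : ℚ) ^ ((i + 1) * j) • sg j w (D v))
    (hD_sus01 : ∀ {i j : ℤ} {v w : Lc}, v ∈ V0 i → w ∈ W1 j →
      D (sus v w) = G.br v w - (-1 : ℚ) ^ i • sg i v (D w))
    (hD_sus11 : ∀ {i j : ℤ} {v w : Lc} (hv : v ∈ V1 i) (hw : w ∈ W1 j),
      D (sus v w) = G.br v w - (-1 : ℚ) ^ ((i + 1) * j) • sg j w (D v)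
        - (-1 : ℚ) ^ i • sg i v (D w)
        + (-1 : ℚ) ^ i • Mag.star G sg (j - 1) (rep i v hv) (D w))
    -- `(L, D)` is a dgl (Theorem 3.8 of the paper)
    (hDD : ∀ x : Lc, D (D x) = 0)
    -- `W = V'` is a copy of `V`: the "prime" map, a dgl isomorphism onto the copy
    (pr : Lc →ₗ[ℚ] Lc)
    (hpr_V0 : ∀ {i : ℤ} {v : Lc}, v ∈ V0 i → pr v ∈ W0 i)
    (hpr_V1 : ∀ {i : ℤ} {v : Lc}, v ∈ V1 i → pr v ∈ W1 i)
    (hpr_br : ∀ {x y : Lc}, x ∈ G.lieSub (fun i => V0 i ⊔ V1 i) →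
      y ∈ G.lieSub (fun i => V0 i ⊔ V1 i) → pr (G.br x y) = G.br (pr x) (pr y))
    (hpr_D : ∀ {x : Lc}, x ∈ G.lieSub (fun i => V0 i ⊔ V1 i) → pr (D x) = D (pr x))
    (hpr_onto0 : ∀ {j : ℤ} {w : Lc}, w ∈ W0 j → ∃ v ∈ V0 j, pr v = w)
    (hpr_onto1 : ∀ {j : ℤ} {w : Lc}, w ∈ W1 j → ∃ v ∈ V1 j, pr v = w)
    -- the Lie morphism `Δ : 𝕃(V₀) → L`, `Δ(v) = v + v'`, modelling the diagonal on `𝕃(V₀)`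
    (Dl : Lc →ₗ[ℚ] Lc)
    (hDl_v : ∀ {i : ℤ} {v : Lc}, v ∈ V0 i → Dl v = v + pr v)
    (hDl_br : ∀ {x y : Lc}, x ∈ G.lieSub V0 → y ∈ G.lieSub V0 →
      Dl (G.br x y) = G.br (Dl x) (Dl y))
 :
    ∀ M : Mag V0,
      D (Mag.gam G sg pr Dl M)
        = Dl (Mag.real G M) - Mag.real G M - pr (Mag.real G M) :=
  statement16_general G V0 V1 W0 W1 hV0 hW0 sus sg hsg_grade hsg_der hsg_vw hsg_Aw D hD_der hD_V0
    hD_W0 hD_sus00 pr hpr_V0 hpr_br Dl hDl_v hDl_br
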